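/- Let Ω ⊂ ℝ² be the open triangle with vertices A(−1/2, 1/2), B(1/2, 1/2), C(1/2, 3/2), and define z(x,y) = 1 − 2y/(1 + √(1+4xy)). Then ∫∫_Ω (∂z/∂x(x,y))² dx dy ≤ ∫_{1/2}^{3/2} 4y³ (ln(1+2y) − 2 ln(2y−1)) dy < +∞, and moreover ∫∫_Ω (∂z/∂y(x,y))² dx dy < +∞. -/

import Mathlib

open MeasureTheory Set Real

/-- The open triangle with vertices A(−1/2,1/2), B(1/2,1/2), C(1/2,3/2):
its sides lie on the lines y = 1/2, x = 1/2 and y = x + 1. -/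
def TriangleEx3 : Set (ℝ × ℝ) :=
  {p : ℝ × ℝ | 1/2 < p.2 ∧ p.1 < 1/2 ∧ p.2 < p.1 + 1}

/-- The explicit solution z(x,y) = 1 − 2y/(1 + √(1+4xy)) of Example 3. -/
noncomputable def zEx3 : ℝ × ℝ → ℝ := fun p =>
  1 - 2 * p.2 / (1 + Real.sqrt (1 + 4 * p.1 * p.2))

/-- Partial derivative ∂z/∂x. -/
noncomputable def zEx3x (p : ℝ × ℝ) : ℝ := deriv (fun t => zEx3 (t, p.2)) p.1

/-- Partial derivative ∂z/∂y. -/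
noncomputable def zEx3y (p : ℝ × ℝ) : ℝ := deriv (fun t => zEx3 (p.1, t)) p.2

/-! On Ω one has x > y − 1, hence 1 + 4xy > (2y − 1)² ≥ 0. Writing s = √(1 + 4xy),
∂z/∂x = 4y²/(s(1 + s)²) and ∂z/∂y = −1/s, so both squared partials are bounded on Ω by
w(x, y) = 16y⁴/(1 + 4xy) (for ∂z/∂y because 16y⁴ > 1 when y > 1/2). By Tonelli over the
horizontal slices y − 1 < x < 1/2, the integral of w over Ω is that of
4y³ log((1 + 2y)/(2y − 1)²) over (1/2, 3/2), whose only singularity is logarithmic. -/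

theorem setLIntegral_prod_symm_of_fibers {α β : Type*} [MeasurableSpace α] [MeasurableSpace β]
    {μ : Measure α} {ν : Measure β} [SFinite μ] [SFinite ν] {t : Set β} {S : β → Set α}
    (hs : MeasurableSet {p : α × β | p.2 ∈ t ∧ p.1 ∈ S p.2}) (ht : MeasurableSet t)
    {f : α × β → ENNReal} (hf : Measurable f) :
    ∫⁻ p in {p : α × β | p.2 ∈ t ∧ p.1 ∈ S p.2}, f p ∂μ.prod ν =
      ∫⁻ y in t, ∫⁻ x in S y, f (x, y) ∂μ ∂ν := by
  rw [← lintegral_indicator hs, lintegral_prod_symm' _ (hf.indicator hs),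
    ← lintegral_indicator ht]
  congr 1 with y
  by_cases hy : y ∈ t
  · have hfiber : MeasurableSet (S y) := by simpa [hy] using measurable_prodMk_right hs (y := y)
    rw [indicator_of_mem hy, ← lintegral_indicator hfiber]
    congr 1 with x
    by_cases hx : x ∈ S y <;> simp [indicator, hx, hy]
  · simp [hy, indicator]

theorem setLIntegral_Ioo_ofReal {f : ℝ → ℝ} {a b : ℝ} (hab : a ≤ b)
    (hf : IntervalIntegrable f volume a b) (hf_nonneg : ∀ x ∈ Ioo a b, 0 ≤ f x) :
    ∫⁻ x in Ioo a b, ENNReal.ofReal (f x) = ENNReal.ofReal (∫ x in a..b, f x) := by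
  rw [intervalIntegral.integral_of_le hab, integral_Ioc_eq_integral_Ioo,
    ofReal_integral_eq_lintegral_ofReal (hf.1.mono_set Ioo_subset_Ioc_self)
      ((ae_restrict_iff' measurableSet_Ioo).2 (ae_of_all _ hf_nonneg))]

theorem one_add_four_mul_mul_pos {x y : ℝ} (hy : 1/2 < y) (hx : min (y - 1) (1/2) ≤ x) :
    0 < 1 + 4 * x * y := by
  rcases min_cases (y - 1) (1/2) with ⟨hmin, -⟩ | ⟨hmin, -⟩ <;> rw [hmin] at hx
  · nlinarith [mul_nonneg (sub_nonneg.2 hx) (by linarith : (0:ℝ) ≤ 4 * y)]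
  · nlinarith

theorem hasDerivAt_zEx3_fst {x y : ℝ} (h : 0 < 1 + 4 * x * y) :
    HasDerivAt (fun t => zEx3 (t, y))
      (4 * y ^ 2 / (√(1 + 4 * x * y) * (1 + √(1 + 4 * x * y)) ^ 2)) x := by
  have hlin : HasDerivAt (fun t : ℝ => 1 + 4 * t * y) (4 * y) x := by
    simpa using (((hasDerivAt_id x).const_mul 4).mul_const y).const_add 1
  have hz := (hasDerivAt_const x 1).sub
    ((hasDerivAt_const x (2 * y)).div ((hlin.sqrt h.ne').const_add 1) (by positivity))
  refine hz.congr_deriv ?_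
  field_simp
  ring

theorem hasDerivAt_zEx3_snd {x y : ℝ} (h : 0 < 1 + 4 * x * y) :
    HasDerivAt (fun t => zEx3 (x, t)) (-1 / √(1 + 4 * x * y)) y := by
  have hsq : √(1 + 4 * x * y) ^ 2 = 1 + 4 * x * y := sq_sqrt h.le
  have hlin : HasDerivAt (fun t : ℝ => 1 + 4 * x * t) (4 * x) y := by
    simpa using ((hasDerivAt_id y).const_mul (4 * x)).const_add 1
  have hz := (hasDerivAt_const y 1).sub
    (((hasDerivAt_id' y).const_mul 2).div ((hlin.sqrt h.ne').const_add 1) (by positivity))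
  refine hz.congr_deriv ?_
  field_simp
  linear_combination -hsq

noncomputable def weightEx3 (p : ℝ × ℝ) : ℝ := 16 * p.2 ^ 4 / (1 + 4 * p.1 * p.2)

noncomputable def weightSliceEx3 (y : ℝ) : ℝ :=
  4 * y ^ 3 * (log (1 + 2 * y) - 2 * log (2 * y - 1))

theorem one_add_four_mul_mul_pos_of_mem_triangleEx3 {p : ℝ × ℝ} (hp : p ∈ TriangleEx3) :
    0 < 1 + 4 * p.1 * p.2 :=
  one_add_four_mul_mul_pos hp.1 (min_le_of_left_le (by linarith [hp.2.2]))

theorem sq_zEx3x_le_weightEx3 {p : ℝ × ℝ} (hp : p ∈ TriangleEx3) :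
    zEx3x p ^ 2 ≤ weightEx3 p := by
  obtain ⟨x, y⟩ := p
  have h : 0 < 1 + 4 * x * y := one_add_four_mul_mul_pos_of_mem_triangleEx3 hp
  set s := √(1 + 4 * x * y)
  have hs : 0 < s := sqrt_pos.2 h
  have hs1 : 1 ≤ (1 + s) ^ 4 := one_le_pow₀ (by linarith)
  rw [zEx3x, (hasDerivAt_zEx3_fst h).deriv]
  calc (4 * y ^ 2 / (s * (1 + s) ^ 2)) ^ 2
      = 16 * y ^ 4 / s ^ 2 / (1 + s) ^ 4 := by field_simp; ring
    _ ≤ 16 * y ^ 4 / s ^ 2 := div_le_self (by positivity) hs1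
    _ = weightEx3 (x, y) := by rw [sq_sqrt h.le, weightEx3]

theorem sq_zEx3y_le_weightEx3 {p : ℝ × ℝ} (hp : p ∈ TriangleEx3) :
    zEx3y p ^ 2 ≤ weightEx3 p := by
  obtain ⟨x, y⟩ := p
  have h : 0 < 1 + 4 * x * y := one_add_four_mul_mul_pos_of_mem_triangleEx3 hp
  have hy : (1 : ℝ) ≤ 16 * y ^ 4 := by
    have : (1 : ℝ) ≤ 2 * y := by linarith [hp.1]
    nlinarith [one_le_pow₀ (n := 4) this]
  rw [zEx3y, (hasDerivAt_zEx3_snd h).deriv, weightEx3, div_pow, sq_sqrt h.le, neg_one_sq]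
  exact div_le_div_of_nonneg_right hy h.le

theorem continuousOn_weightEx3_slice {y : ℝ} (hy : 1/2 < y) :
    ContinuousOn (fun x => weightEx3 (x, y)) (uIcc (y - 1) (1/2)) :=
  ContinuousOn.div (by fun_prop) (by fun_prop) fun _ hx =>
    (one_add_four_mul_mul_pos hy hx.1).ne'

theorem integral_weightEx3_slice {y : ℝ} (hy : 1/2 < y) :
    ∫ x in (y - 1)..(1/2), weightEx3 (x, y) = weightSliceEx3 y := by
  have hderiv : ∀ x ∈ uIcc (y - 1) (1/2),
      HasDerivAt (fun x => 4 * y ^ 3 * log (1 + 4 * x * y)) (weightEx3 (x, y)) x := by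
    intro x hx
    have hlin : HasDerivAt (fun t : ℝ => 1 + 4 * t * y) (4 * y) x := by
      simpa using (((hasDerivAt_id x).const_mul 4).mul_const y).const_add 1
    refine ((hlin.log (one_add_four_mul_mul_pos hy hx.1).ne').const_mul _).congr_deriv ?_
    rw [weightEx3]
    field_simp
    ring
  rw [intervalIntegral.integral_eq_sub_of_hasDerivAt hderiv
      (continuousOn_weightEx3_slice hy).intervalIntegrable,
    weightSliceEx3, show 1 + 4 * (y - 1) * y = (2 * y - 1) ^ 2 by ring, log_pow]
  ring_nf

theorem weightEx3_nonneg {x y : ℝ} (hy : 1/2 < y) (hx : min (y - 1) (1/2) ≤ x) :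
    0 ≤ weightEx3 (x, y) :=
  div_nonneg (by positivity) (one_add_four_mul_mul_pos hy hx).le

theorem weightSliceEx3_nonneg {y : ℝ} (hy : y ∈ Ioo (1/2 : ℝ) (3/2)) :
    0 ≤ weightSliceEx3 y := by
  rw [← integral_weightEx3_slice hy.1]
  exact intervalIntegral.integral_nonneg (by linarith [hy.2])
    fun x hx => weightEx3_nonneg hy.1 (min_le_of_left_le hx.1)

theorem intervalIntegrable_weightSliceEx3 :
    IntervalIntegrable weightSliceEx3 volume (1/2) (3/2) := by
  have hlog : IntervalIntegrable (fun y : ℝ => log (2 * y - 1)) volume (1/2) (3/2) := by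
    convert (intervalIntegral.intervalIntegrable_log' (a := 0) (b := 2)).comp_sub_right 1
      |>.comp_mul_left (c := 2) using 1 <;> norm_num
  have hlog' : IntervalIntegrable (fun y : ℝ => log (1 + 2 * y)) volume (1/2) (3/2) := by
    convert (intervalIntegral.intervalIntegrable_log' (a := 2) (b := 4)).comp_add_left 1
      |>.comp_mul_left (c := 2) using 1 <;> norm_num
  unfold weightSliceEx3
  simp only [mul_sub]
  exact (hlog'.continuousOn_mul (by fun_prop)).sub
    ((hlog.const_mul 2).continuousOn_mul (g := fun y => 4 * y ^ 3) (by fun_prop))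

theorem triangleEx3_eq :
    TriangleEx3 =
      {p : ℝ × ℝ | p.2 ∈ Ioo (1/2 : ℝ) (3/2) ∧ p.1 ∈ Ioo (p.2 - 1) (1/2)} := by
  ext ⟨x, y⟩
  simp only [TriangleEx3, mem_ofPred_eq, mem_Ioo]
  grind

theorem setLIntegral_triangleEx3_weightEx3 :
    ∫⁻ p in TriangleEx3, ENNReal.ofReal (weightEx3 p) =
      ENNReal.ofReal (∫ y in (1/2 : ℝ)..(3/2), weightSliceEx3 y) := by
  have hΩ : MeasurableSet TriangleEx3 := by unfold TriangleEx3; measurability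
  rw [triangleEx3_eq] at hΩ ⊢
  rw [Measure.volume_eq_prod,
    setLIntegral_prod_symm_of_fibers (S := fun y => Ioo (y - 1) (1/2)) hΩ measurableSet_Ioo
      (by unfold weightEx3; fun_prop),
    ← setLIntegral_Ioo_ofReal (by norm_num) intervalIntegrable_weightSliceEx3
      fun y hy => weightSliceEx3_nonneg hy]
  refine setLIntegral_congr_fun measurableSet_Ioo fun y hy => ?_
  rw [setLIntegral_Ioo_ofReal (by linarith [hy.2])
      (continuousOn_weightEx3_slice hy.1).intervalIntegrable
      fun x hx => weightEx3_nonneg hy.1 (min_le_of_left_le hx.1.le),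
    integral_weightEx3_slice hy.1]

theorem stmt_3 :
    (∫⁻ p in TriangleEx3, ENNReal.ofReal ((zEx3x p) ^ 2) ≤
      ENNReal.ofReal (∫ y in (1/2 : ℝ)..(3/2 : ℝ),
        4 * y ^ 3 * (Real.log (1 + 2 * y) - 2 * Real.log (2 * y - 1)))) ∧
    IntervalIntegrable
      (fun y : ℝ => 4 * y ^ 3 * (Real.log (1 + 2 * y) - 2 * Real.log (2 * y - 1)))
      volume (1/2) (3/2) ∧
    (∫⁻ p in TriangleEx3, ENNReal.ofReal ((zEx3y p) ^ 2) < ⊤) := by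
  have hweight : Measurable fun p => ENNReal.ofReal (weightEx3 p) := by
    unfold weightEx3; fun_prop
  have hx : ∫⁻ p in TriangleEx3, ENNReal.ofReal (zEx3x p ^ 2) ≤
      ∫⁻ p in TriangleEx3, ENNReal.ofReal (weightEx3 p) :=
    setLIntegral_mono hweight fun p hp => ENNReal.ofReal_le_ofReal (sq_zEx3x_le_weightEx3 hp)
  have hy : ∫⁻ p in TriangleEx3, ENNReal.ofReal (zEx3y p ^ 2) ≤
      ∫⁻ p in TriangleEx3, ENNReal.ofReal (weightEx3 p) :=
    setLIntegral_mono hweight fun p hp => ENNReal.ofReal_le_ofReal (sq_zEx3y_le_weightEx3 hp)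
  rw [setLIntegral_triangleEx3_weightEx3] at hx hy
  exact ⟨hx, intervalIntegrable_weightSliceEx3, hy.trans_lt ENNReal.ofReal_lt_top⟩
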